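/- arXiv:2206.11882 — 3 statements merged into one kernel-verified Lean document; each statement's English description precedes it below -/
import Mathlib

section
/- For every complex sequence a = (a_0, a_1, ...) in ℓ², the Cesàro transform (C a)_n = (1/(n+1)) ∑_{k=0}^n a_k defines a bounded linear operator on ℓ² with norm at most 2 (Hardy's inequality). -/
open scoped BigOperators

/-- Real Cesàro mean of a sequence. -/
noncomputable def cesaroR (c : ℕ → ℝ) (n : ℕ) : ℝ :=
  (∑ k ∈ Finset.range (n + 1), c k) / (n + 1)

lemma cesaroR_rel (c : ℕ → ℝ) (n : ℕ) :
    ((n : ℝ) + 1) * cesaroR c n = (n : ℝ) * cesaroR c (n - 1) + c n := by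
  cases n with
  | zero => simp [cesaroR]
  | succ m =>
      have h1 : ((m : ℝ) + 1) ≠ 0 := by positivity
      have h2 : ((m : ℝ) + 1 + 1) ≠ 0 := by positivity
      simp only [cesaroR, Nat.succ_sub_one, Nat.cast_succ]
      rw [Finset.sum_range_succ]
      field_simp

lemma hardy_key (c : ℕ → ℝ) (N : ℕ) :
    ∑ n ∈ Finset.range N, (cesaroR c n) ^ 2
      ≤ 2 * ∑ n ∈ Finset.range N, cesaroR c n * c n := by
  set B := cesaroR c with hB
  have main : ∀ M : ℕ, ∑ n ∈ Finset.range M, (B n ^ 2 - 2 * B n * c n)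
      ≤ -(M : ℝ) * (B (M - 1)) ^ 2 := by
    intro M
    induction M with
    | zero => simp
    | succ K ih =>
        rw [Finset.sum_range_succ]
        have hrel := cesaroR_rel c K
        rw [← hB] at hrel
        have hcK : c K = ((K : ℝ) + 1) * B K - (K : ℝ) * B (K - 1) := by linarith
        have : (K : ℝ) * B (K - 1) ^ 2 - ((K : ℝ) + 1) * B K ^ 2
            ≥ B K ^ 2 - 2 * B K * c K := by
          rw [hcK]
          nlinarith [mul_nonneg (by positivity : (0:ℝ) ≤ (K:ℝ))
            (sq_nonneg (B K - B (K - 1)))]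
        have hK : ((K + 1 : ℕ) : ℝ) = (K : ℝ) + 1 := by push_cast; ring
        simp only [Nat.succ_sub_one, hK]
        linarith
  have := main N
  have h2 : -(N : ℝ) * (B (N - 1)) ^ 2 ≤ 0 := by
    have : (0:ℝ) ≤ (N : ℝ) * (B (N - 1)) ^ 2 := by positivity
    linarith
  have h3 : ∑ n ∈ Finset.range N, (B n ^ 2 - 2 * B n * c n) ≤ 0 := le_trans this h2
  rw [Finset.sum_sub_distrib] at h3
  have : ∑ n ∈ Finset.range N, 2 * B n * c n
      = 2 * ∑ n ∈ Finset.range N, B n * c n := by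
    rw [Finset.mul_sum]; apply Finset.sum_congr rfl; intros; ring
  linarith [this ▸ h3]

/-- Hardy's inequality for nonnegative real sequences, finite form. -/
lemma hardy_real (c : ℕ → ℝ) (hc : ∀ n, 0 ≤ c n) (N : ℕ) :
    ∑ n ∈ Finset.range N, (cesaroR c n) ^ 2
      ≤ 4 * ∑ n ∈ Finset.range N, (c n) ^ 2 := by
  set B := cesaroR c with hB
  set S := ∑ n ∈ Finset.range N, B n ^ 2 with hS
  set T := ∑ n ∈ Finset.range N, c n ^ 2 with hT
  have hS0 : 0 ≤ S := Finset.sum_nonneg fun n _ => sq_nonneg _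
  have hT0 : 0 ≤ T := Finset.sum_nonneg fun n _ => sq_nonneg _
  have hCS : (∑ n ∈ Finset.range N, B n * c n) ^ 2 ≤ S * T :=
    Finset.sum_mul_sq_le_sq_mul_sq _ _ _
  have hkey : S ≤ 2 * ∑ n ∈ Finset.range N, B n * c n := hardy_key c N
  have hbc0 : 0 ≤ ∑ n ∈ Finset.range N, B n * c n := by
    apply Finset.sum_nonneg
    intro n _
    have hBn : 0 ≤ B n := by
      apply div_nonneg (Finset.sum_nonneg fun k _ => hc k)
      positivity
    exact mul_nonneg hBn (hc n)
  nlinarith [sq_nonneg (∑ n ∈ Finset.range N, B n * c n)]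

/-- The complex Cesàro transform as a bare function on sequences. -/
noncomputable def cesaroC (a : ℕ → ℂ) (n : ℕ) : ℂ :=
  (1 / (n + 1 : ℂ)) * ∑ k ∈ Finset.range (n + 1), a k

lemma norm_cesaroC_le (a : ℕ → ℂ) (n : ℕ) :
    ‖cesaroC a n‖ ≤ cesaroR (fun k => ‖a k‖) n := by
  have h1 : ‖(1 / (n + 1 : ℂ))‖ = 1 / ((n : ℝ) + 1) := by
    rw [norm_div, norm_one]
    congr 1
    have : ((n : ℂ) + 1) = ((n + 1 : ℕ) : ℂ) := by push_cast; ring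
    rw [this, Complex.norm_natCast]
    push_cast; ring
  calc ‖cesaroC a n‖ = ‖(1 / (n + 1 : ℂ))‖ * ‖∑ k ∈ Finset.range (n + 1), a k‖ := by
        rw [cesaroC, norm_mul]
    _ ≤ (1 / ((n : ℝ) + 1)) * ∑ k ∈ Finset.range (n + 1), ‖a k‖ := by
        rw [h1]
        apply mul_le_mul_of_nonneg_left (norm_sum_le _ _)
        positivity
    _ = cesaroR (fun k => ‖a k‖) n := by rw [cesaroR]; ring

lemma cesaroC_sum_le (a : ℕ → ℂ) (N : ℕ) :
    ∑ n ∈ Finset.range N, ‖cesaroC a n‖ ^ 2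
      ≤ 4 * ∑ n ∈ Finset.range N, ‖a n‖ ^ 2 := by
  calc ∑ n ∈ Finset.range N, ‖cesaroC a n‖ ^ 2
      ≤ ∑ n ∈ Finset.range N, (cesaroR (fun k => ‖a k‖) n) ^ 2 := by
        apply Finset.sum_le_sum
        intro n _
        have h := norm_cesaroC_le a n
        have := norm_nonneg (cesaroC a n)
        nlinarith
    _ ≤ 4 * ∑ n ∈ Finset.range N, ‖a n‖ ^ 2 :=
        hardy_real (fun k => ‖a k‖) (fun k => norm_nonneg _) N

lemma cesaroC_finset_sum_le (a : lp (fun _ : ℕ => ℂ) 2) (s : Finset ℕ) :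
    ∑ n ∈ s, ‖cesaroC (⇑a) n‖ ^ 2 ≤ (2 * ‖a‖) ^ 2 := by
  obtain ⟨N, hN⟩ := s.exists_nat_subset_range
  have h1 : ∑ n ∈ s, ‖cesaroC (⇑a) n‖ ^ 2
      ≤ ∑ n ∈ Finset.range N, ‖cesaroC (⇑a) n‖ ^ 2 :=
    Finset.sum_le_sum_of_subset_of_nonneg hN (fun n _ _ => by positivity)
  have h2 := cesaroC_sum_le (⇑a) N
  -- ∑_{range N} ‖a n‖² ≤ ‖a‖²
  have hp : (0:ℝ) < (2 : ENNReal).toReal := by norm_num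
  have hsum := lp.hasSum_norm hp a
  have h3 : ∑ n ∈ Finset.range N, ‖a n‖ ^ 2 ≤ ‖a‖ ^ 2 := by
    have htoReal : (2 : ENNReal).toReal = (2:ℝ) := by norm_num
    have hsum' : HasSum (fun n => ‖a n‖ ^ (2:ℝ)) (‖a‖ ^ (2:ℝ)) := by
      rw [← htoReal]; exact hsum
    have hsum2 : HasSum (fun n => ‖a n‖ ^ (2:ℕ)) (‖a‖ ^ (2:ℝ)) := by
      convert hsum' using 2 with n
      rw [← Real.rpow_natCast (‖a n‖) 2]; norm_num
    have hle := sum_le_hasSum (Finset.range N)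
      (fun n _ => sq_nonneg _) hsum2
    have : ‖a‖ ^ (2:ℝ) = ‖a‖ ^ (2:ℕ) := by
      rw [← Real.rpow_natCast (‖a‖) 2]; norm_num
    rw [this] at hle
    exact_mod_cast hle
  have hnorm0 : 0 ≤ ‖a‖ := norm_nonneg a
  nlinarith

lemma cesaroC_memℓp (a : lp (fun _ : ℕ => ℂ) 2) :
    Memℓp (cesaroC (⇑a)) 2 := by
  apply memℓp_gen'
  intro s
  have h := cesaroC_finset_sum_le a s
  have htoReal : (2 : ENNReal).toReal = (2:ℝ) := by norm_num
  calc ∑ i ∈ s, ‖cesaroC (⇑a) i‖ ^ (2 : ENNReal).toReal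
      = ∑ i ∈ s, ‖cesaroC (⇑a) i‖ ^ (2:ℕ) := by
        apply Finset.sum_congr rfl
        intro i _
        rw [htoReal, ← Real.rpow_natCast (‖cesaroC (⇑a) i‖) 2]
        norm_num
    _ ≤ (2 * ‖a‖) ^ 2 := h

/-- The Cesàro operator as a linear map on ℓ². -/
noncomputable def cesaroLM : lp (fun _ : ℕ => ℂ) 2 →ₗ[ℂ] lp (fun _ : ℕ => ℂ) 2 where
  toFun a := ⟨cesaroC (⇑a), cesaroC_memℓp a⟩
  map_add' a b := by
    ext n
    simp only [lp.coeFn_add, Pi.add_apply]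
    show cesaroC (⇑(a + b)) n = cesaroC (⇑a) n + cesaroC (⇑b) n
    simp only [cesaroC, lp.coeFn_add, Pi.add_apply, Finset.sum_add_distrib]
    ring
  map_smul' c a := by
    ext n
    simp only [RingHom.id_apply, lp.coeFn_smul, Pi.smul_apply]
    show cesaroC (⇑(c • a)) n = c • cesaroC (⇑a) n
    simp only [cesaroC, lp.coeFn_smul, Pi.smul_apply, smul_eq_mul, Finset.mul_sum]
    apply Finset.sum_congr rfl
    intros
    ring

lemma cesaroLM_norm_le (a : lp (fun _ : ℕ => ℂ) 2) :
    ‖cesaroLM a‖ ≤ 2 * ‖a‖ := by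
  have hp : (0:ℝ) < (2 : ENNReal).toReal := by norm_num
  apply lp.norm_le_of_forall_sum_le hp (by positivity)
  intro s
  have h := cesaroC_finset_sum_le a s
  have htoReal : (2 : ENNReal).toReal = (2:ℝ) := by norm_num
  have hcoe : ∀ i, (cesaroLM a) i = cesaroC (⇑a) i := fun i => rfl
  calc ∑ i ∈ s, ‖(cesaroLM a) i‖ ^ (2 : ENNReal).toReal
      = ∑ i ∈ s, ‖cesaroC (⇑a) i‖ ^ (2:ℕ) := by
        apply Finset.sum_congr rfl
        intro i _
        rw [hcoe, htoReal, ← Real.rpow_natCast (‖cesaroC (⇑a) i‖) 2]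
        norm_num
    _ ≤ (2 * ‖a‖) ^ 2 := h
    _ = (2 * ‖a‖) ^ (2 : ENNReal).toReal := by
        rw [htoReal, ← Real.rpow_natCast (2 * ‖a‖) 2]
        norm_num

/-- Hardy's inequality: the Cesàro transform defines a bounded operator on ℓ²
with norm at most 2. -/
theorem cesaro_bounded_on_l2 :
    ∃ C : lp (fun _ : ℕ => ℂ) 2 →L[ℂ] lp (fun _ : ℕ => ℂ) 2,
      ‖C‖ ≤ 2 ∧
      ∀ (a : lp (fun _ : ℕ => ℂ) 2) (n : ℕ),
        (C a) n = (1 / (n + 1 : ℂ)) * ∑ k ∈ Finset.range (n + 1), a k := by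
  refine ⟨LinearMap.mkContinuous cesaroLM 2 cesaroLM_norm_le, ?_, ?_⟩
  · exact LinearMap.mkContinuous_norm_le _ (by norm_num) _
  · intro a n
    rfl
end

section
/- The adjoint of the Cesàro operator on ℓ² is given by (C* a)_n = ∑_{k=n}^∞ a_k/(k+1); that is, for all a, b ∈ ℓ², ⟨C a, b⟩ = ⟨a, C* b⟩ where (C* b)_n = ∑_{k ≥ n} b_k/(k+1). -/
open Filter Finset
open scoped Topology

lemma tsum_mul_le_sqrt_mul_sqrt (f g : ℕ → ℝ) (hf0 : ∀ n, 0 ≤ f n) (hg0 : ∀ n, 0 ≤ g n)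
    (hf : Summable fun n => f n ^ 2) (hg : Summable fun n => g n ^ 2) :
    ∑' n, f n * g n ≤ Real.sqrt (∑' n, f n ^ 2) * Real.sqrt (∑' n, g n ^ 2) := by
  have hfg : Summable fun n => f n * g n := by
    refine Summable.of_nonneg_of_le (fun n => mul_nonneg (hf0 n) (hg0 n)) (fun n => ?_)
      ((hf.add hg).mul_left (1/2 : ℝ))
    nlinarith [sq_nonneg (f n - g n)]
  refine Summable.tsum_le_of_sum_le hfg fun s => ?_
  have h1 : (∑ i ∈ s, f i * g i) ^ 2 ≤ (∑ i ∈ s, f i ^ 2) * ∑ i ∈ s, g i ^ 2 :=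
    Finset.sum_mul_sq_le_sq_mul_sq s f g
  have h2 : ∑ i ∈ s, f i ^ 2 ≤ ∑' n, f n ^ 2 := Summable.sum_le_tsum s (fun i _ => sq_nonneg _) hf
  have h3 : ∑ i ∈ s, g i ^ 2 ≤ ∑' n, g n ^ 2 := Summable.sum_le_tsum s (fun i _ => sq_nonneg _) hg
  have h0 : (0:ℝ) ≤ ∑ i ∈ s, f i * g i := Finset.sum_nonneg fun i _ => mul_nonneg (hf0 i) (hg0 i)
  have h4 : ∑ i ∈ s, f i * g i ≤ Real.sqrt ((∑ i ∈ s, f i ^ 2) * ∑ i ∈ s, g i ^ 2) :=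
    (Real.le_sqrt h0 (by positivity)).2 h1
  refine h4.trans ?_
  rw [Real.sqrt_mul (Finset.sum_nonneg fun i _ => sq_nonneg _)]
  exact mul_le_mul (Real.sqrt_le_sqrt h2) (Real.sqrt_le_sqrt h3) (Real.sqrt_nonneg _)
    (Real.sqrt_nonneg _)

lemma inv_sq_tail (N : ℕ) (hN : 1 ≤ N) :
    Summable (fun k : ℕ => (1 / ((k:ℝ) + N + 1)) ^ 2) ∧
      ∑' k : ℕ, (1 / ((k:ℝ) + N + 1)) ^ 2 ≤ 1 / (N:ℝ) := by
  have hNpos : (0:ℝ) < N := by exact_mod_cast hN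
  have hu0 : Tendsto (fun n : ℕ => 1 / ((N:ℝ) + n)) atTop (nhds 0) := by
    have h1 : Tendsto (fun n : ℕ => (N:ℝ) + n) atTop atTop :=
      tendsto_atTop_add_const_left _ _ tendsto_natCast_atTop_atTop
    simpa [one_div, Pi.inv_def] using h1.inv_tendsto_atTop
  have hts : HasSum (fun k : ℕ => 1 / ((N:ℝ) + k) - 1 / ((N:ℝ) + k + 1)) (1 / (N:ℝ)) := by
    rw [hasSum_iff_tendsto_nat_of_nonneg]
    · have heq : ∀ n : ℕ, ∑ i ∈ range n,
          (1 / ((N:ℝ) + i) - 1 / ((N:ℝ) + i + 1)) = 1 / (N:ℝ) - 1 / ((N:ℝ) + n) := by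
        intro n
        have := Finset.sum_range_sub' (fun i : ℕ => 1 / ((N:ℝ) + i)) n
        simp only [Nat.cast_zero, add_zero, Nat.cast_add, Nat.cast_one] at this
        rw [← this]
        refine Finset.sum_congr rfl fun i _ => by ring_nf
      simp_rw [heq]
      have := (tendsto_const_nhds (x := 1 / (N:ℝ)) (f := atTop (α := ℕ))).sub hu0
      simpa using this
    · intro k
      have h1 : (0:ℝ) < (N:ℝ) + k := by positivity
      rw [sub_nonneg]
      apply one_div_le_one_div_of_le h1
      linarith
  have hle : ∀ k : ℕ, (1 / ((k:ℝ) + N + 1)) ^ 2 ≤ 1 / ((N:ℝ) + k) - 1 / ((N:ℝ) + k + 1) := by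
    intro k
    have h1 : (0:ℝ) < (N:ℝ) + k := by positivity
    have h2 : (0:ℝ) < (N:ℝ) + k + 1 := by positivity
    have key : 1 / ((N:ℝ) + k) - 1 / ((N:ℝ) + k + 1) = 1 / (((N:ℝ) + k) * ((N:ℝ) + k + 1)) := by
      field_simp
      ring
    rw [key, div_pow, one_pow]
    apply one_div_le_one_div_of_le (by positivity)
    nlinarith [h1]
  have hsum : Summable (fun k : ℕ => (1 / ((k:ℝ) + N + 1)) ^ 2) :=
    Summable.of_nonneg_of_le (fun k => sq_nonneg _) hle hts.summable
  exact ⟨hsum, (Summable.tsum_le_tsum hle hsum hts.summable).trans_eq hts.tsum_eq⟩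

open scoped BigOperators ComplexInnerProductSpace InnerProductSpace

set_option maxHeartbeats 1000000 in
/-- The adjoint of the Cesàro operator on ℓ² is (C* b)_n = ∑_{k ≥ n} b_k/(k+1):
for all a, b ∈ ℓ², ⟨C a, b⟩ = ⟨a, C* b⟩. -/
theorem cesaro_adjoint
    (a b Ca Csb : lp (fun _ : ℕ => ℂ) 2)
    (hCa : ∀ n : ℕ, Ca n = (1 / (n + 1 : ℂ)) * ∑ k ∈ Finset.range (n + 1), a k)
    (hCsb : ∀ n : ℕ, Csb n = ∑' k : ℕ, if n ≤ k then b k / (k + 1 : ℂ) else 0) :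
    ⟪Ca, b⟫_ℂ = ⟪a, Csb⟫_ℂ := by
  classical
  have hb2 : Summable fun k : ℕ => ‖b k‖ ^ 2 := by
    have h := (lp.memℓp b).summable (p := 2) (by norm_num)
    simpa using h
  have ha2 : Summable fun k : ℕ => ‖a k‖ ^ 2 := by
    have h := (lp.memℓp a).summable (p := 2) (by norm_num)
    simpa using h
  have hinv2 : Summable fun k : ℕ => (1 / ((k:ℝ) + 1)) ^ 2 := by
    have h1 := (inv_sq_tail 1 le_rfl).1
    rw [← summable_nat_add_iff 1]
    simpa [add_assoc] using h1
  set f : ℕ → ℂ := fun m => b m / ((m:ℂ) + 1) with hf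
  have hnormf : ∀ m : ℕ, ‖f m‖ = ‖b m‖ * (1 / ((m:ℝ) + 1)) := by
    intro m
    have hcast : ((m:ℂ) + 1) = ((m + 1 : ℕ) : ℂ) := by push_cast; ring
    rw [hf]
    simp only [hcast, norm_div, Complex.norm_natCast]
    push_cast
    rw [mul_one_div]
  have hfsum : Summable f := by
    rw [← summable_norm_iff]
    refine Summable.of_nonneg_of_le (fun n => norm_nonneg _) (fun n => ?_)
      ((hb2.add hinv2).mul_left (1/2 : ℝ))
    rw [hnormf n]
    nlinarith [sq_nonneg (‖b n‖ - 1 / ((n:ℝ) + 1))]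
  set T : ℕ → ℂ := fun N => ∑' k : ℕ, f (k + N) with hT
  have hCsb' : ∀ N n : ℕ, n < N →
      Csb n = (∑ k ∈ Finset.range N, if n ≤ k then f k else 0) + T N := by
    intro N n hn
    have hsummable : Summable fun k : ℕ => if n ≤ k then f k else 0 := by
      refine Summable.of_norm (Summable.of_nonneg_of_le (fun k => norm_nonneg _)
        (fun k => ?_) hfsum.norm)
      split <;> simp
    rw [hCsb n]
    have hsplit := Summable.sum_add_tsum_nat_add (f := fun k : ℕ => if n ≤ k then f k else 0) N hsummable
    rw [hf] at hsplit
    rw [← hsplit]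
    congr 1
    rw [hT]
    refine (tsum_congr fun i => ?_).symm
    simp only [hf]
    rw [if_pos (show n ≤ i + N by omega)]
  have key : ∀ N : ℕ,
      ∑ n ∈ Finset.range N, (starRingEnd ℂ) (a n) * Csb n
        = (∑ n ∈ Finset.range N, (starRingEnd ℂ) (Ca n) * b n)
          + (∑ n ∈ Finset.range N, (starRingEnd ℂ) (a n)) * T N := by
    intro N
    have h1 : ∀ n ∈ Finset.range N, (starRingEnd ℂ) (a n) * Csb n
        = (∑ k ∈ Finset.range N, if n ≤ k then (starRingEnd ℂ) (a n) * f k else 0)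
          + (starRingEnd ℂ) (a n) * T N := by
      intro n hn
      rw [hCsb' N n (Finset.mem_range.1 hn), mul_add, Finset.mul_sum]
      congr 1
      exact Finset.sum_congr rfl fun k _ => by rw [mul_ite, mul_zero]
    rw [Finset.sum_congr rfl h1, Finset.sum_add_distrib, ← Finset.sum_mul]
    congr 1
    rw [Finset.sum_comm]
    refine Finset.sum_congr rfl fun k hk => ?_
    have hkN : k < N := Finset.mem_range.1 hk
    have hfilter : Finset.range (k+1) = (Finset.range N).filter (fun n => n ≤ k) := by
      ext n
      simp only [Finset.mem_range, Finset.mem_filter, Nat.lt_succ_iff]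
      omega
    rw [← Finset.sum_filter, ← hfilter, ← Finset.sum_mul, hCa k]
    have hconj : (starRingEnd ℂ) (1 / ((k:ℂ) + 1)) = 1 / ((k:ℂ) + 1) := by
      simp
    simp only [map_mul, map_sum, hconj, hf]
    ring
  have hP : Filter.Tendsto (fun N => ∑ n ∈ Finset.range N, (starRingEnd ℂ) (Ca n) * b n)
      Filter.atTop (nhds (⟪Ca, b⟫_ℂ)) := by
    have := (lp.hasSum_inner (𝕜 := ℂ) Ca b).tendsto_sum_nat
    simpa [RCLike.inner_apply, mul_comm] using this
  have hQ : Filter.Tendsto (fun N => ∑ n ∈ Finset.range N, (starRingEnd ℂ) (a n) * Csb n)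
      Filter.atTop (nhds (⟪a, Csb⟫_ℂ)) := by
    have := (lp.hasSum_inner (𝕜 := ℂ) a Csb).tendsto_sum_nat
    simpa [RCLike.inner_apply, mul_comm] using this
  have hS : Filter.Tendsto
      (fun N => (∑ n ∈ Finset.range N, (starRingEnd ℂ) (a n)) * T N) Filter.atTop (nhds 0) := by
    have heps : Filter.Tendsto (fun N : ℕ => ∑' k : ℕ, ‖b (k + N)‖ ^ 2) Filter.atTop (nhds 0) :=
      tendsto_sum_nat_add (fun m : ℕ => ‖b m‖ ^ 2)
    have hbound : Filter.Tendsto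
        (fun N : ℕ => Real.sqrt (∑' n : ℕ, ‖a n‖ ^ 2) * Real.sqrt (∑' k : ℕ, ‖b (k + N)‖ ^ 2))
        Filter.atTop (nhds 0) := by
      have h1 : Filter.Tendsto (fun N : ℕ => Real.sqrt (∑' k : ℕ, ‖b (k + N)‖ ^ 2))
          Filter.atTop (nhds 0) := by
        have := (Real.continuous_sqrt.tendsto 0).comp heps
        simpa [Function.comp_def] using this
      simpa using h1.const_mul (Real.sqrt (∑' n : ℕ, ‖a n‖ ^ 2))
    refine squeeze_zero_norm' ?_ hbound
    filter_upwards [Filter.eventually_ge_atTop 1] with N hN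
    have hNpos : (0:ℝ) < N := by exact_mod_cast hN
    have hSb : ‖∑ n ∈ Finset.range N, (starRingEnd ℂ) (a n)‖
        ≤ Real.sqrt ((∑' n : ℕ, ‖a n‖ ^ 2) * N) := by
      refine (norm_sum_le _ _).trans ?_
      have hsum0 : (0:ℝ) ≤ ∑ n ∈ Finset.range N, ‖(starRingEnd ℂ) (a n)‖ :=
        Finset.sum_nonneg fun n _ => norm_nonneg _
      refine (Real.le_sqrt hsum0 (mul_nonneg (tsum_nonneg fun i => sq_nonneg _) (Nat.cast_nonneg N))).2 ?_
      have hcs := Finset.sum_mul_sq_le_sq_mul_sq (Finset.range N)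
        (fun n => ‖a n‖) (fun _ => (1:ℝ))
      simp only [mul_one, one_pow, Finset.sum_const, Finset.card_range, nsmul_eq_mul,
        mul_one] at hcs
      have hconjnorm : ∀ n : ℕ, ‖(starRingEnd ℂ) (a n)‖ = ‖a n‖ := fun n => RCLike.norm_conj _
      simp_rw [hconjnorm]
      calc (∑ n ∈ Finset.range N, ‖a n‖) ^ 2
          ≤ (∑ n ∈ Finset.range N, ‖a n‖ ^ 2) * N := hcs
        _ ≤ (∑' n : ℕ, ‖a n‖ ^ 2) * N := by
            apply mul_le_mul_of_nonneg_right _ hNpos.le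
            exact Summable.sum_le_tsum _ (fun i _ => sq_nonneg _) ha2
    have hTb : ‖T N‖ ≤ Real.sqrt (∑' k : ℕ, ‖b (k + N)‖ ^ 2) * Real.sqrt (1 / (N:ℝ)) := by
      have hsummable : Summable fun k : ℕ => ‖f (k + N)‖ :=
        (summable_nat_add_iff N).2 hfsum.norm
      have h0 : ‖T N‖ ≤ ∑' k : ℕ, ‖f (k + N)‖ := by
        rw [hT]
        exact norm_tsum_le_tsum_norm hsummable
      have hform : ∀ k : ℕ, ‖f (k + N)‖ = ‖b (k + N)‖ * (1 / ((k:ℝ) + N + 1)) := by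
        intro k
        rw [hnormf (k + N)]
        push_cast
        ring_nf
      have hb2' : Summable fun k : ℕ => ‖b (k + N)‖ ^ 2 := (summable_nat_add_iff N).2 hb2
      have hcs := tsum_mul_le_sqrt_mul_sqrt (fun k => ‖b (k + N)‖) (fun k => 1 / ((k:ℝ) + N + 1))
        (fun k => norm_nonneg _) (fun k => by positivity) hb2' (inv_sq_tail N hN).1
      calc ‖T N‖ ≤ ∑' k : ℕ, ‖b (k + N)‖ * (1 / ((k:ℝ) + N + 1)) := by
            rw [← tsum_congr hform]; exact h0
        _ ≤ Real.sqrt (∑' k : ℕ, ‖b (k + N)‖ ^ 2)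
            * Real.sqrt (∑' k : ℕ, (1 / ((k:ℝ) + N + 1)) ^ 2) := hcs
        _ ≤ Real.sqrt (∑' k : ℕ, ‖b (k + N)‖ ^ 2) * Real.sqrt (1 / (N:ℝ)) := by
            apply mul_le_mul_of_nonneg_left _ (Real.sqrt_nonneg _)
            exact Real.sqrt_le_sqrt (inv_sq_tail N hN).2
    calc ‖(∑ n ∈ Finset.range N, (starRingEnd ℂ) (a n)) * T N‖
        = ‖∑ n ∈ Finset.range N, (starRingEnd ℂ) (a n)‖ * ‖T N‖ := norm_mul _ _
      _ ≤ Real.sqrt ((∑' n : ℕ, ‖a n‖ ^ 2) * N)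
          * (Real.sqrt (∑' k : ℕ, ‖b (k + N)‖ ^ 2) * Real.sqrt (1 / (N:ℝ))) :=
          mul_le_mul hSb hTb (norm_nonneg _) (Real.sqrt_nonneg _)
      _ = Real.sqrt (∑' n : ℕ, ‖a n‖ ^ 2) * Real.sqrt (∑' k : ℕ, ‖b (k + N)‖ ^ 2)
          * (Real.sqrt (N:ℝ) * Real.sqrt (1 / (N:ℝ))) := by
          rw [Real.sqrt_mul (tsum_nonneg fun i => sq_nonneg _)]
          ring
      _ = Real.sqrt (∑' n : ℕ, ‖a n‖ ^ 2) * Real.sqrt (∑' k : ℕ, ‖b (k + N)‖ ^ 2) := by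
          rw [← Real.sqrt_mul hNpos.le, mul_one_div, div_self hNpos.ne', Real.sqrt_one, mul_one]
  have h1 : Filter.Tendsto (fun N => ∑ n ∈ Finset.range N, (starRingEnd ℂ) (a n) * Csb n)
      Filter.atTop (nhds (⟪Ca, b⟫_ℂ + 0)) := by
    simp_rw [key]
    exact hP.add hS
  have := tendsto_nhds_unique h1 hQ
  simpa using this
end

section
/- Let H be a Hilbert space, N and K closed subspaces, and let P be the orthogonal projection onto K^⊥ along the decomposition H = K^⊥ ⊕ K. Then P(N) is closed in H if and only if N + K is closed in H. -/
/-- Let P be the orthogonal projection onto K^⊥ (so P x ∈ K^⊥ and x - P x ∈ K).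
Then P(N) is closed iff N + K is closed. -/
theorem projection_image_closed_iff_sum_closed
    {H : Type*} [NormedAddCommGroup H] [InnerProductSpace ℂ H] [CompleteSpace H]
    (N K : Submodule ℂ H) (hN : IsClosed (N : Set H)) (hK : IsClosed (K : Set H))
    (P : H →L[ℂ] H) (hP : ∀ x : H, P x ∈ Kᗮ ∧ x - P x ∈ K) :
    IsClosed (P '' (N : Set H)) ↔ IsClosed ((N ⊔ K : Submodule ℂ H) : Set H) := by
  have hzero : ∀ z : H, z ∈ K → z ∈ Kᗮ → z = 0 := by
    intro z h1 h2
    have := K.orthogonal_disjoint.le_bot (Submodule.mem_inf.mpr ⟨h1, h2⟩)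
    simpa using this
  have hPK : ∀ k ∈ K, P k = 0 := by
    intro k hk
    have h2 : (P k : H) ∈ K := by
      have := K.sub_mem hk (hP k).2
      simpa using this
    exact hzero _ h2 (hP k).1
  have hfix : ∀ y ∈ Kᗮ, P y = y := by
    intro y hy
    have h1 : y - P y ∈ Kᗮ := Kᗮ.sub_mem hy (hP y).1
    have h0 := hzero _ (hP y).2 h1
    have := sub_eq_zero.mp h0
    exact this.symm
  have hPn_mem : ∀ n ∈ N, P n ∈ N ⊔ K := by
    intro n hn
    have h1 : n + (-(n - P n)) ∈ N ⊔ K :=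
      Submodule.add_mem_sup hn (K.neg_mem (hP n).2)
    have h2 : n + (-(n - P n)) = P n := by abel
    rwa [h2] at h1
  have himg : P '' (N : Set H) = ((N ⊔ K : Submodule ℂ H) : Set H) ∩ (Kᗮ : Set H) := by
    ext x
    constructor
    · rintro ⟨n, hn, rfl⟩
      exact ⟨hPn_mem n hn, (hP n).1⟩
    · rintro ⟨hx1, hx2⟩
      rcases Submodule.mem_sup.mp hx1 with ⟨n, hn, k, hk, rfl⟩
      refine ⟨n, hn, ?_⟩
      have h : P (n + k) = P n + P k := map_add P n k
      rw [hfix _ hx2] at h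
      rw [h, hPK k hk, add_zero]
  have hpre : ((N ⊔ K : Submodule ℂ H) : Set H) = P ⁻¹' (P '' (N : Set H)) := by
    ext x
    constructor
    · rintro hx
      rcases Submodule.mem_sup.mp hx with ⟨n, hn, k, hk, rfl⟩
      exact ⟨n, hn, by rw [map_add, hPK k hk, add_zero]⟩
    · rintro ⟨n, hn, hPx⟩
      have hx : x = P n + (x - P x) := by rw [hPx]; abel
      rw [hx]
      exact (N ⊔ K).add_mem (hPn_mem n hn)
        (Submodule.mem_sup_right (hP x).2)
  constructor
  · intro h
    rw [hpre]
    exact h.preimage P.continuous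
  · intro h
    rw [himg]
    exact h.inter K.isClosed_orthogonal
end
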